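/- arXiv:1212.2257 — 7 statements merged into one kernel-verified Lean document; each statement's English description precedes it below -/
import Mathlib

section
/- The transition system specification P_CLL of the process calculus CLL has exactly one stable transition model. -/
namespace CLL

attribute [local instance] Classical.propDecidable

/-- CLL process terms over a set `Act` of visible actions.  The action `τ` is
represented by `none : Option Act`, a visible action `a` by `some a`. -/
inductive Tm (Act : Type) : Type where
  | nil  : Tm Act                            -- 0
  | bot  : Tm Act                            -- ⊥
  | pre  : Option Act → Tm Act → Tm Act      -- α.t
  | ec   : Tm Act → Tm Act → Tm Act          -- t □ t
  | conj : Tm Act → Tm Act → Tm Act          -- t ∧ t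
  | disj : Tm Act → Tm Act → Tm Act          -- t ∨ t
  | par  : Set Act → Tm Act → Tm Act → Tm Act -- t ∥_A t

/-- A transition model: a set of transitions `t →α t'`, of instances `t F` of the
inconsistency predicate, and of instances `t F̄_α` of the auxiliary predicates. -/
structure Model (Act : Type) where
  Tr   : Tm Act → Option Act → Tm Act → Prop
  F    : Tm Act → Prop
  Fbar : Tm Act → Option Act → Prop

variable {Act : Type}

/-- The least transition relation of the positive TSS `Strip(P_CLL, M)`:
ground instances of transition rules of `P_CLL` whose negative premises
(checked against `M`) hold, with those negative premises removed. -/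
inductive STr (M : Model Act) : Tm Act → Option Act → Tm Act → Prop where
  | pre (α : Option Act) (t : Tm Act) : STr M (Tm.pre α t) α t
  | ecL {t1 t2 y1 : Tm Act} {a : Act} :
      STr M t1 (some a) y1 → (∀ y, ¬ M.Tr t2 none y) →
      STr M (Tm.ec t1 t2) (some a) y1
  | ecR {t1 t2 y2 : Tm Act} {a : Act} :
      (∀ y, ¬ M.Tr t1 none y) → STr M t2 (some a) y2 →
      STr M (Tm.ec t1 t2) (some a) y2
  | ecTauL {t1 t2 y1 : Tm Act} :
      STr M t1 none y1 → STr M (Tm.ec t1 t2) none (Tm.ec y1 t2)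
  | ecTauR {t1 t2 y2 : Tm Act} :
      STr M t2 none y2 → STr M (Tm.ec t1 t2) none (Tm.ec t1 y2)
  | conjAct {t1 t2 y1 y2 : Tm Act} {a : Act} :
      STr M t1 (some a) y1 → STr M t2 (some a) y2 →
      STr M (Tm.conj t1 t2) (some a) (Tm.conj y1 y2)
  | conjTauL {t1 t2 y1 : Tm Act} :
      STr M t1 none y1 → STr M (Tm.conj t1 t2) none (Tm.conj y1 t2)
  | conjTauR {t1 t2 y2 : Tm Act} :
      STr M t2 none y2 → STr M (Tm.conj t1 t2) none (Tm.conj t1 y2)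
  | disjL (t1 t2 : Tm Act) : STr M (Tm.disj t1 t2) none t1
  | disjR (t1 t2 : Tm Act) : STr M (Tm.disj t1 t2) none t2
  | parTauL {A : Set Act} {t1 t2 y1 : Tm Act} :
      STr M t1 none y1 → STr M (Tm.par A t1 t2) none (Tm.par A y1 t2)
  | parTauR {A : Set Act} {t1 t2 y2 : Tm Act} :
      STr M t2 none y2 → STr M (Tm.par A t1 t2) none (Tm.par A t1 y2)
  | parL {A : Set Act} {t1 t2 y1 : Tm Act} {a : Act} :
      STr M t1 (some a) y1 → (∀ y, ¬ M.Tr t2 none y) → a ∉ A →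
      STr M (Tm.par A t1 t2) (some a) (Tm.par A y1 t2)
  | parR {A : Set Act} {t1 t2 y2 : Tm Act} {a : Act} :
      (∀ y, ¬ M.Tr t1 none y) → STr M t2 (some a) y2 → a ∉ A →
      STr M (Tm.par A t1 t2) (some a) (Tm.par A t1 y2)
  | parSync {A : Set Act} {t1 t2 y1 y2 : Tm Act} {a : Act} :
      STr M t1 (some a) y1 → STr M t2 (some a) y2 → a ∈ A →
      STr M (Tm.par A t1 t2) (some a) (Tm.par A y1 y2)

/-- Least model of the `F̄_α` rules of `Strip(P_CLL, M)`. -/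
inductive SFbar (M : Model Act) : Tm Act → Option Act → Prop where
  | intro {t1 t2 y : Tm Act} {α : Option Act} :
      STr M (Tm.conj t1 t2) α y → ¬ M.F y → SFbar M (Tm.conj t1 t2) α

/-- Least model of the `F` rules of `Strip(P_CLL, M)`. -/
inductive SF (M : Model Act) : Tm Act → Prop where
  | bot : SF M Tm.bot
  | pre {t : Tm Act} (α : Option Act) : SF M t → SF M (Tm.pre α t)
  | disj {t1 t2 : Tm Act} : SF M t1 → SF M t2 → SF M (Tm.disj t1 t2)
  | ecL {t1 t2 : Tm Act} : SF M t1 → SF M (Tm.ec t1 t2)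
  | ecR {t1 t2 : Tm Act} : SF M t2 → SF M (Tm.ec t1 t2)
  | conjL {t1 t2 : Tm Act} : SF M t1 → SF M (Tm.conj t1 t2)
  | conjR {t1 t2 : Tm Act} : SF M t2 → SF M (Tm.conj t1 t2)
  | parL {A : Set Act} {t1 t2 : Tm Act} : SF M t1 → SF M (Tm.par A t1 t2)
  | parR {A : Set Act} {t1 t2 : Tm Act} : SF M t2 → SF M (Tm.par A t1 t2)
  | conjMisL {t1 t2 y1 : Tm Act} {a : Act} :
      STr M t1 (some a) y1 → (∀ y, ¬ M.Tr t2 (some a) y) →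
      (∀ y, ¬ M.Tr (Tm.conj t1 t2) none y) → SF M (Tm.conj t1 t2)
  | conjMisR {t1 t2 y2 : Tm Act} {a : Act} :
      (∀ y, ¬ M.Tr t1 (some a) y) → STr M t2 (some a) y2 →
      (∀ y, ¬ M.Tr (Tm.conj t1 t2) none y) → SF M (Tm.conj t1 t2)
  | conjDead {t1 t2 z : Tm Act} {α : Option Act} :
      STr M (Tm.conj t1 t2) α z → ¬ M.Fbar (Tm.conj t1 t2) α →
      SF M (Tm.conj t1 t2)

/-- `M` is a stable transition model of `P_CLL`:  `M` coincides with the least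
model of the positive TSS `Strip(P_CLL, M)`. -/
def IsStable (M : Model Act) : Prop :=
  (∀ t α t', M.Tr t α t' ↔ STr M t α t') ∧
  (∀ t, M.F t ↔ SF M t) ∧
  (∀ t α, M.Fbar t α ↔ SFbar M t α)

/-- `t` is stable: it has no τ-transition. -/
def Stable (M : Model Act) (t : Tm Act) : Prop := ∀ t', ¬ M.Tr t none t'

/-- The ready set `I(t)`. -/
def Ready (M : Model Act) (t : Tm Act) : Set (Option Act) :=
  {α | ∃ u, M.Tr t α u}

/-- One τ-step between consistent terms: `t →τ_F s`. -/
def TauF (M : Model Act) (t s : Tm Act) : Prop :=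
  M.Tr t none s ∧ ¬ M.F t ∧ ¬ M.F s

/-- `t ⇒ε_F s`: a sequence of τ-transitions all whose terms (endpoints included)
are consistent. -/
def EpsF (M : Model Act) (t s : Tm Act) : Prop :=
  ¬ M.F t ∧ Relation.ReflTransGen (TauF M) t s

/-- `t ⇒ε_F| s`:  `t ⇒ε_F s` with `s` stable. -/
def EpsFS (M : Model Act) (t s : Tm Act) : Prop :=
  EpsF M t s ∧ Stable M s

/-- `t ⇒α_F s`. -/
def WeakF (M : Model Act) (α : Option Act) (t s : Tm Act) : Prop :=
  ∃ r p, EpsF M t r ∧ M.Tr r α p ∧ EpsF M p s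

/-- `t ⇒α_F| s`. -/
def WeakFS (M : Model Act) (α : Option Act) (t s : Tm Act) : Prop :=
  WeakF M α t s ∧ Stable M s

/-- `R` is a stable ready simulation relation. -/
def IsRS (M : Model Act) (R : Tm Act → Tm Act → Prop) : Prop :=
  ∀ t s, R t s →
    (Stable M t ∧ Stable M s) ∧
    (¬ M.F t → ¬ M.F s) ∧
    (∀ (a : Act) t', WeakFS M (some a) t t' →
      ∃ s', WeakFS M (some a) s s' ∧ R t' s') ∧
    (¬ M.F t → Ready M t = Ready M s)

/-- `t ⊏̃_RS s`. -/
def RSs (M : Model Act) (t s : Tm Act) : Prop :=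
  ∃ R, IsRS M R ∧ R t s

/-- `t ⊑_RS s`. -/
def RSle (M : Model Act) (t s : Tm Act) : Prop :=
  ∀ t', EpsFS M t t' → ∃ s', EpsFS M s s' ∧ RSs M t' s'

/-- `t =_RS s`. -/
def RSeq (M : Model Act) (t s : Tm Act) : Prop :=
  RSle M t s ∧ RSle M s t

/-- The binary operators `□`, `∧` and `∥_A`. -/
def IsStaticOp (Act : Type) (op : Tm Act → Tm Act → Tm Act) : Prop :=
  op = Tm.ec ∨ op = Tm.conj ∨ ∃ A : Set Act, op = Tm.par A

/-- General external choice `□_{i<n} t_i` over a finite sequence of terms. -/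
def bigEC : List (Tm Act) → Tm Act
  | [] => Tm.nil
  | t :: ts => ts.foldl Tm.ec t

/-- General disjunction `⋁_{i<n} t_i` over a finite (nonempty) sequence. -/
def bigDisj : List (Tm Act) → Tm Act
  | [] => Tm.nil
  | t :: ts => ts.foldl Tm.disj t

/-- `□_{i<n} a_i.t_i` for a sequence of prefixed terms given by pairs. -/
def ecPre (l : List (Act × Tm Act)) : Tm Act :=
  bigEC (l.map fun p => Tm.pre (some p.1) p.2)

/-- The sequence of all `a_i.(t_i ∧ s_j)` with `a_i = b_j`. -/
noncomputable def matched (l1 l2 : List (Act × Tm Act)) : List (Act × Tm Act) :=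
  ((l1.product l2).filter fun q => decide (q.1.1 = q.2.1)).map
    fun q => (q.1.1, Tm.conj q.1.2 q.2.2)

/-- The right-hand side `((□Ω1)□(□Ω2))□(□Ω3)` of the expansion law. -/
noncomputable def expRHS (A : Set Act) (l1 l2 : List (Act × Tm Act)) : Tm Act :=
  Tm.ec
    (Tm.ec
      (bigEC ((l1.filter fun p => decide (p.1 ∉ A)).map
        fun p => Tm.pre (some p.1) (Tm.par A p.2 (ecPre l2))))
      (bigEC ((l2.filter fun q => decide (q.1 ∉ A)).map
        fun q => Tm.pre (some q.1) (Tm.par A (ecPre l1) q.2))))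
    (bigEC (((l1.product l2).filter fun q => decide (q.1.1 = q.2.1 ∧ q.1.1 ∈ A)).map
      fun q => Tm.pre (some q.1.1) (Tm.par A q.1.2 q.2.2)))

/-- Basic process terms: built from `0` by prefixing, `∨`, `□` and `∥_A`. -/
inductive Basic : Tm Act → Prop where
  | nil : Basic Tm.nil
  | pre (α : Option Act) {t : Tm Act} : Basic t → Basic (Tm.pre α t)
  | disj {t1 t2 : Tm Act} : Basic t1 → Basic t2 → Basic (Tm.disj t1 t2)
  | ec {t1 t2 : Tm Act} : Basic t1 → Basic t2 → Basic (Tm.ec t1 t2)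
  | par (A : Set Act) {t1 t2 : Tm Act} :
      Basic t1 → Basic t2 → Basic (Tm.par A t1 t2)

/-- Derivability `⊢ t ≤ s` in the axiomatic system `AX_CLL`. -/
inductive Deriv : Tm Act → Tm Act → Prop where
  -- inference rules
  | refl (t : Tm Act) : Deriv t t
  | trans {t u s : Tm Act} : Deriv t u → Deriv u s → Deriv t s
  | pre_mono (α : Option Act) {t s : Tm Act} :
      Deriv t s → Deriv (Tm.pre α t) (Tm.pre α s)
  | ec_mono {t1 s1 t2 s2 : Tm Act} :
      Deriv t1 s1 → Deriv t2 s2 → Deriv (Tm.ec t1 t2) (Tm.ec s1 s2)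
  | conj_mono {t1 s1 t2 s2 : Tm Act} :
      Deriv t1 s1 → Deriv t2 s2 → Deriv (Tm.conj t1 t2) (Tm.conj s1 s2)
  | disj_mono {t1 s1 t2 s2 : Tm Act} :
      Deriv t1 s1 → Deriv t2 s2 → Deriv (Tm.disj t1 t2) (Tm.disj s1 s2)
  | par_mono (A : Set Act) {t1 s1 t2 s2 : Tm Act} :
      Deriv t1 s1 → Deriv t2 s2 → Deriv (Tm.par A t1 t2) (Tm.par A s1 s2)
  -- EC1–EC5
  | ec_comm (x y : Tm Act) : Deriv (Tm.ec x y) (Tm.ec y x)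
  | ec_assoc1 (x y z : Tm Act) : Deriv (Tm.ec (Tm.ec x y) z) (Tm.ec x (Tm.ec y z))
  | ec_assoc2 (x y z : Tm Act) : Deriv (Tm.ec x (Tm.ec y z)) (Tm.ec (Tm.ec x y) z)
  | ec_idem1 (x : Tm Act) : Deriv (Tm.ec x x) x
  | ec_idem2 (x : Tm Act) : Deriv x (Tm.ec x x)
  | ec_nil1 (x : Tm Act) : Deriv (Tm.ec x Tm.nil) x
  | ec_nil2 (x : Tm Act) : Deriv x (Tm.ec x Tm.nil)
  | ec_bot1 (x : Tm Act) : Deriv (Tm.ec x Tm.bot) Tm.bot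
  | ec_bot2 (x : Tm Act) : Deriv Tm.bot (Tm.ec x Tm.bot)
  -- DI1–DI5
  | di_comm (x y : Tm Act) : Deriv (Tm.disj x y) (Tm.disj y x)
  | di_assoc1 (x y z : Tm Act) :
      Deriv (Tm.disj x (Tm.disj y z)) (Tm.disj (Tm.disj x y) z)
  | di_assoc2 (x y z : Tm Act) :
      Deriv (Tm.disj (Tm.disj x y) z) (Tm.disj x (Tm.disj y z))
  | di_idem1 (x : Tm Act) : Deriv (Tm.disj x x) x
  | di_idem2 (x : Tm Act) : Deriv x (Tm.disj x x)
  | di_bot1 (x : Tm Act) : Deriv (Tm.disj x Tm.bot) x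
  | di_bot2 (x : Tm Act) : Deriv x (Tm.disj x Tm.bot)
  | di_le (x y : Tm Act) : Deriv x (Tm.disj x y)
  -- CO1–CO4
  | co_comm (x y : Tm Act) : Deriv (Tm.conj x y) (Tm.conj y x)
  | co_assoc1 (x y z : Tm Act) :
      Deriv (Tm.conj (Tm.conj x y) z) (Tm.conj x (Tm.conj y z))
  | co_assoc2 (x y z : Tm Act) :
      Deriv (Tm.conj x (Tm.conj y z)) (Tm.conj (Tm.conj x y) z)
  | co_idem1 (x : Tm Act) : Deriv (Tm.conj x x) x
  | co_idem2 (x : Tm Act) : Deriv x (Tm.conj x x)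
  | co_bot1 (x : Tm Act) : Deriv (Tm.conj x Tm.bot) Tm.bot
  | co_bot2 (x : Tm Act) : Deriv Tm.bot (Tm.conj x Tm.bot)
  -- DS1–DS4
  | ds1 (x y z : Tm Act) :
      Deriv (Tm.ec x (Tm.disj y z)) (Tm.disj (Tm.ec x y) (Tm.ec x z))
  | ds2 (x y z : Tm Act) :
      Deriv (Tm.conj x (Tm.disj y z)) (Tm.disj (Tm.conj x y) (Tm.conj x z))
  | ds3 (A : Set Act) (x y z : Tm Act) :
      Deriv (Tm.par A x (Tm.disj y z)) (Tm.disj (Tm.par A x y) (Tm.par A x z))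
  | ds4 (a : Act) {x y : Tm Act} : Basic x → Basic y →
      Deriv (Tm.pre (some a) (Tm.disj x y))
            (Tm.ec (Tm.pre (some a) x) (Tm.pre (some a) y))
  -- PR1, PR2
  | pr1a (a : Act) : Deriv (Tm.pre (some a) Tm.bot) Tm.bot
  | pr1b (a : Act) : Deriv Tm.bot (Tm.pre (some a) Tm.bot)
  | pr2a (x : Tm Act) : Deriv (Tm.pre none x) x
  | pr2b (x : Tm Act) : Deriv x (Tm.pre none x)
  -- PA1, PA2
  | pa_comm (A : Set Act) (x y : Tm Act) : Deriv (Tm.par A x y) (Tm.par A y x)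
  | pa_bot1 (A : Set Act) (x : Tm Act) : Deriv (Tm.par A x Tm.bot) Tm.bot
  | pa_bot2 (A : Set Act) (x : Tm Act) : Deriv Tm.bot (Tm.par A x Tm.bot)
  -- ECC1–ECC3
  | ecc1a (l1 l2 : List (Act × Tm Act)) :
      ({a | a ∈ l1.map Prod.fst} : Set Act) ≠ {a | a ∈ l2.map Prod.fst} →
      Deriv (Tm.conj (ecPre l1) (ecPre l2)) Tm.bot
  | ecc1b (l1 l2 : List (Act × Tm Act)) :
      ({a | a ∈ l1.map Prod.fst} : Set Act) ≠ {a | a ∈ l2.map Prod.fst} →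
      Deriv Tm.bot (Tm.conj (ecPre l1) (ecPre l2))
  | ecc2 (l : List (Act × Tm Act × Tm Act)) :
      Deriv (ecPre (l.map fun p => (p.1, Tm.conj p.2.1 p.2.2)))
            (Tm.conj (ecPre (l.map fun p => (p.1, p.2.1)))
                     (ecPre (l.map fun p => (p.1, p.2.2))))
  | ecc3 (l : List (Act × Tm Act × Tm Act)) :
      (l.map Prod.fst).Nodup →
      Deriv (Tm.conj (ecPre (l.map fun p => (p.1, p.2.1)))
                     (ecPre (l.map fun p => (p.1, p.2.2))))
            (ecPre (l.map fun p => (p.1, Tm.conj p.2.1 p.2.2)))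
  -- EXP1, EXP2
  | exp1 (A : Set Act) (l1 l2 : List (Act × Tm Act)) :
      (∀ p ∈ l1, Basic p.2) → (∀ q ∈ l2, Basic q.2) →
      Deriv (Tm.par A (ecPre l1) (ecPre l2)) (expRHS A l1 l2)
  | exp2 (A : Set Act) (l1 l2 : List (Act × Tm Act)) :
      (∀ p ∈ l1, Basic p.2) → (∀ q ∈ l2, Basic q.2) →
      Deriv (expRHS A l1 l2) (Tm.par A (ecPre l1) (ecPre l2))

/-- The set `NF_B` of normal forms different from `⊥`. -/
inductive NFB : Tm Act → Prop where
  | mk (ls : List (List (Act × Tm Act))) :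
      ls ≠ [] →
      (∀ l ∈ ls, (l.map Prod.fst).Nodup) →
      (∀ l ∈ ls, ∀ p ∈ l, NFB p.2) →
      NFB (bigDisj (ls.map ecPre))

/-- Normal forms. -/
def NF (t : Tm Act) : Prop := t = Tm.bot ∨ NFB t

end CLL

/-!
τ-transitions are derived by rules without negative premises, so they are the same in every
model; the negative premises of the remaining transition rules only ask about τ-transitions,
so all transitions are fixed as well. Transitions strictly decrease the size of a term, so the
negative premises of the rules for `F` and `F̄_α` at `t` only refer to `F` at terms smaller
than `t`: a stable `F` solves a well-founded recursion on size, which has exactly one solution.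
-/

namespace CLL

variable {Act : Type}

theorem STr.of_tau {M : Model Act} (M' : Model Act) {t t' : Tm Act}
    (h : STr M t none t') : STr M' t none t' := by
  generalize hα : (none : Option Act) = α at h
  induction h with
  | pre α t => exact .pre α t
  | ecTauL _ ih => exact .ecTauL (ih hα)
  | ecTauR _ ih => exact .ecTauR (ih hα)
  | conjTauL _ ih => exact .conjTauL (ih hα)
  | conjTauR _ ih => exact .conjTauR (ih hα)
  | disjL t1 t2 => exact .disjL t1 t2
  | disjR t1 t2 => exact .disjR t1 t2
  | parTauL _ ih => exact .parTauL (ih hα)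
  | parTauR _ ih => exact .parTauR (ih hα)
  | _ => cases hα

theorem sTr_none_iff (M M' : Model Act) {t t' : Tm Act} :
    STr M t none t' ↔ STr M' t none t' :=
  ⟨.of_tau M', .of_tau M⟩

theorem STr.of_tr_none_iff {M M' : Model Act}
    (hM : ∀ t t', M.Tr t none t' ↔ M'.Tr t none t') {t t' : Tm Act} {α : Option Act}
    (h : STr M t α t') : STr M' t α t' := by
  induction h with
  | ecL _ h2 ih => exact .ecL ih fun y hy => h2 y ((hM _ y).mpr hy)
  | ecR h1 _ ih => exact .ecR (fun y hy => h1 y ((hM _ y).mpr hy)) ih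
  | parL _ h2 ha ih => exact .parL ih (fun y hy => h2 y ((hM _ y).mpr hy)) ha
  | parR h1 _ ha ih => exact .parR (fun y hy => h1 y ((hM _ y).mpr hy)) ih ha
  | _ => constructor <;> assumption

theorem sTr_iff_of_tr_none_iff {M M' : Model Act}
    (hM : ∀ t t', M.Tr t none t' ↔ M'.Tr t none t') {t t' : Tm Act} {α : Option Act} :
    STr M t α t' ↔ STr M' t α t' :=
  ⟨.of_tr_none_iff hM, .of_tr_none_iff fun t t' => (hM t t').symm⟩

def Model.ofTr (T : Tm Act → Option Act → Tm Act → Prop) : Model Act :=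
  ⟨T, fun _ => False, fun _ _ => False⟩

/-- One round of `STr` already yields the right τ-transitions; the second round then yields
the right transitions of every kind. -/
def stableTr : Tm Act → Option Act → Tm Act → Prop :=
  STr (.ofTr (STr (.ofTr fun _ _ _ => False)))

theorem sTr_iff_stableTr {M : Model Act}
    (hM : ∀ t t', M.Tr t none t' ↔ stableTr t none t') {t t' : Tm Act} {α : Option Act} :
    STr M t α t' ↔ stableTr t α t' :=
  sTr_iff_of_tr_none_iff (M' := .ofTr (STr (.ofTr fun _ _ _ => False)))
    fun t t' => (hM t t').trans (sTr_none_iff _ _)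

theorem IsStable.tr_iff {M : Model Act} (hM : IsStable M) {t t' : Tm Act} {α : Option Act} :
    M.Tr t α t' ↔ stableTr t α t' :=
  (hM.1 t α t').trans <| sTr_iff_stableTr fun t t' => (hM.1 t none t').trans (sTr_none_iff _ _)

theorem sFbar_iff {M : Model Act} (hM : ∀ t t', M.Tr t none t' ↔ stableTr t none t')
    {t : Tm Act} {α : Option Act} :
    SFbar M t α ↔ (∃ u v, t = Tm.conj u v) ∧ ∃ y, stableTr t α y ∧ ¬ M.F y := by
  constructor
  · rintro ⟨hy, hF⟩
    exact ⟨⟨_, _, rfl⟩, _, (sTr_iff_stableTr hM).1 hy, hF⟩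
  · rintro ⟨⟨u, v, rfl⟩, y, hy, hF⟩
    exact .intro ((sTr_iff_stableTr hM).2 hy) hF

def modelWithF (G : Tm Act → Prop) : Model Act where
  Tr := stableTr
  F := G
  Fbar t α := (∃ u v, t = Tm.conj u v) ∧ ∃ y, stableTr t α y ∧ ¬ G y

theorem sTr_modelWithF_iff {G : Tm Act → Prop} {t t' : Tm Act} {α : Option Act} :
    STr (modelWithF G) t α t' ↔ stableTr t α t' :=
  sTr_iff_stableTr fun _ _ => .rfl

theorem IsStable.eq_modelWithF {M : Model Act} (hM : IsStable M) : M = modelWithF M.F := by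
  obtain ⟨T, G, Fb⟩ := M
  have hTr : T = stableTr := by
    funext t α t'
    exact propext hM.tr_iff
  subst hTr
  congr
  funext t α
  exact propext ((hM.2.2 t α).trans (sFbar_iff fun _ _ => .rfl))

theorem isStable_modelWithF {G : Tm Act → Prop} (hG : ∀ t, G t ↔ SF (modelWithF G) t) :
    IsStable (modelWithF G) :=
  ⟨fun _ _ _ => sTr_modelWithF_iff.symm, hG,
    fun _ _ => (sFbar_iff (M := modelWithF G) fun _ _ => .rfl).symm⟩

def size : Tm Act → ℕ
  | .nil => 0
  | .bot => 0
  | .pre _ t => size t + 1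
  | .ec t1 t2 | .conj t1 t2 | .disj t1 t2 | .par _ t1 t2 => size t1 + size t2 + 1

theorem STr.size_lt {M : Model Act} {t t' : Tm Act} {α : Option Act} (h : STr M t α t') :
    size t' < size t := by
  induction h <;> simp only [size] at * <;> omega

theorem stableTr.size_lt {t t' : Tm Act} {α : Option Act} (h : stableTr t α t') :
    size t' < size t :=
  STr.size_lt h

theorem SF.modelWithF_of_eqOn {G G' : Tm Act → Prop} {t : Tm Act}
    (h : SF (modelWithF G) t) (hG : ∀ s, size s < size t → (G s ↔ G' s)) :
    SF (modelWithF G') t := by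
  induction h with
  | bot => exact .bot
  | pre α _ ih => exact .pre α (ih fun s hs => hG s (by simp only [size]; omega))
  | disj _ _ ih1 ih2 =>
    exact .disj (ih1 fun s hs => hG s (by simp only [size]; omega))
      (ih2 fun s hs => hG s (by simp only [size]; omega))
  | ecL _ ih => exact .ecL (ih fun s hs => hG s (by simp only [size]; omega))
  | ecR _ ih => exact .ecR (ih fun s hs => hG s (by simp only [size]; omega))
  | conjL _ ih => exact .conjL (ih fun s hs => hG s (by simp only [size]; omega))
  | conjR _ ih => exact .conjR (ih fun s hs => hG s (by simp only [size]; omega))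
  | parL _ ih => exact .parL (ih fun s hs => hG s (by simp only [size]; omega))
  | parR _ ih => exact .parR (ih fun s hs => hG s (by simp only [size]; omega))
  | conjMisL h1 h2 h3 => exact .conjMisL (sTr_modelWithF_iff.2 (sTr_modelWithF_iff.1 h1)) h2 h3
  | conjMisR h1 h2 h3 => exact .conjMisR h1 (sTr_modelWithF_iff.2 (sTr_modelWithF_iff.1 h2)) h3
  | conjDead hz hFbar =>
    refine .conjDead (sTr_modelWithF_iff.2 (sTr_modelWithF_iff.1 hz)) ?_
    rintro ⟨hconj, y, hy, hG'y⟩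
    exact hFbar ⟨hconj, y, hy, fun hGy => hG'y ((hG y hy.size_lt).1 hGy)⟩

theorem sF_modelWithF_iff_of_eqOn {G G' : Tm Act → Prop} {t : Tm Act}
    (hG : ∀ s, size s < size t → (G s ↔ G' s)) :
    SF (modelWithF G) t ↔ SF (modelWithF G') t :=
  ⟨fun h => h.modelWithF_of_eqOn hG, fun h => h.modelWithF_of_eqOn fun s hs => (hG s hs).symm⟩

def stableF (t : Tm Act) : Prop :=
  SF (modelWithF fun s => ∃ _ : size s < size t, stableF s) t
termination_by size t

theorem stableF_iff (t : Tm Act) : stableF t ↔ SF (modelWithF stableF) t := by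
  rw [stableF]
  exact sF_modelWithF_iff_of_eqOn fun s hs => ⟨fun ⟨_, h⟩ => h, fun h => ⟨hs, h⟩⟩

theorem iff_stableF_of_iff {G : Tm Act → Prop} (hG : ∀ t, G t ↔ SF (modelWithF G) t)
    (t : Tm Act) : G t ↔ stableF t := by
  rw [hG, stableF_iff]
  exact sF_modelWithF_iff_of_eqOn fun s hs => iff_stableF_of_iff hG s
termination_by size t

theorem IsStable.eq_modelWithF_stableF {M : Model Act} (hM : IsStable M) :
    M = modelWithF stableF := by
  have hF : ∀ t, M.F t ↔ SF (modelWithF M.F) t := by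
    rw [← hM.eq_modelWithF]
    exact hM.2.1
  rw [hM.eq_modelWithF, funext fun t => propext (iff_stableF_of_iff hF t)]

end CLL

/-- The TSS `P_CLL` has exactly one stable transition model. -/
theorem stmt0 (Act : Type) : ∃! M : CLL.Model Act, CLL.IsStable M :=
  ⟨CLL.modelWithF CLL.stableF, CLL.isStable_modelWithF CLL.stableF_iff,
    fun _ hM => hM.eq_modelWithF_stableF⟩
end

section
/- The LTS associated with CLL is τ-pure: for every CLL process term t, if t has a τ-transition in M_CLL then t has no a-transition in M_CLL for any a ∈ Act. -/
namespace CLL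

attribute [local instance] Classical.propDecidable

variable {Act : Type}

end CLL

/-! A rule deriving a visible step of `t₁ □ t₂` or `t₁ ∥_A t₂` from a step of one component
carries a negative premise forbidding τ-steps of the other component, while a visible step of
`t₁ ∧ t₂` or a synchronisation needs visible steps of both components. So, by induction on the
visible step, no component able to move silently survives, provided the negative premises (read
in `M`) are violated by the τ-steps of `Strip(P_CLL, M)`, i.e. provided `STr M ⊆ M.Tr`. -/

namespace CLL

variable {Act : Type} {M : Model Act}

theorem STr.not_tau_of_visible (hTr : ∀ t α t', STr M t α t' → M.Tr t α t')
    {t t' : Tm Act} {a : Act} (h : STr M t (some a) t') (y : Tm Act) : ¬ STr M t none y := by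
  generalize hα : (some a : Option Act) = α at h
  induction h generalizing a y with
  | ecL _ hstable ih | parL _ hstable _ ih =>
    intro hy
    cases hy <;> rename_i hτ
    · exact ih _ rfl hτ
    · exact hstable _ (hTr _ _ _ hτ)
  | ecR hstable _ ih | parR hstable _ _ ih =>
    intro hy
    cases hy <;> rename_i hτ
    · exact hstable _ (hTr _ _ _ hτ)
    · exact ih _ rfl hτ
  | conjAct _ _ ih₁ ih₂ | parSync _ _ _ ih₁ ih₂ =>
    intro hy
    cases hy <;> rename_i hτ
    · exact ih₁ _ rfl hτ
    · exact ih₂ _ rfl hτ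
  | pre => rintro ⟨⟩; cases hα
  | _ => cases hα

end CLL

/-- `LTS(CLL)` is τ-pure. -/
theorem stmt1 (Act : Type) (M : CLL.Model Act) (hM : CLL.IsStable M) :
    ∀ t : CLL.Tm Act, (∃ t', M.Tr t none t') →
      ∀ (a : Act) (t' : CLL.Tm Act), ¬ M.Tr t (some a) t' := by
  rintro t ⟨u, hu⟩ a t' ha
  exact CLL.STr.not_tau_of_visible (fun _ _ _ => (hM.1 _ _ _).mpr) ((hM.1 _ _ _).mp ha) u
    ((hM.1 _ _ _).mp hu)
end

section
/- The LTS associated with CLL satisfies condition (LTS1), backward propagation of inconsistency: for every CLL process term t, if there exists α ∈ I(t) such that every t' with t →α_CLL t' satisfies t' ∈ F_CLL, then t ∈ F_CLL. -/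
namespace CLL

attribute [local instance] Classical.propDecidable

variable {Act : Type}

end CLL

section Aux

open CLL

variable {Act : Type} {M : Model Act}

lemma sf_ec_inv {t1 t2 : Tm Act} (h : SF M (Tm.ec t1 t2)) : SF M t1 ∨ SF M t2 := by
  cases h with
  | ecL h => exact Or.inl h
  | ecR h => exact Or.inr h

lemma sf_par_inv {A : Set Act} {t1 t2 : Tm Act} (h : SF M (Tm.par A t1 t2)) :
    SF M t1 ∨ SF M t2 := by
  cases h with
  | parL h => exact Or.inl h
  | parR h => exact Or.inr h

end Aux

/-- `LTS(CLL)` satisfies (LTS1): backward propagation of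
inconsistency. -/
theorem stmt2 (Act : Type) (M : CLL.Model Act) (hM : CLL.IsStable M) :
    ∀ t : CLL.Tm Act,
      (∃ α : Option Act, (∃ u, M.Tr t α u) ∧ ∀ t', M.Tr t α t' → M.F t') →
      M.F t := by
  obtain ⟨hTr, hF, hFbar⟩ := hM
  intro t
  induction t with
  | nil =>
      rintro ⟨α, ⟨u, hu⟩, -⟩
      exact absurd ((hTr _ _ _).mp hu) (by intro h; cases h)
  | bot => intro _; exact (hF _).mpr CLL.SF.bot
  | pre β s =>
      rintro ⟨α, ⟨u, hu⟩, hall⟩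
      cases (hTr _ _ _).mp hu with
      | pre =>
          exact (hF _).mpr (CLL.SF.pre β
            ((hF _).mp (hall s ((hTr _ _ _).mpr (CLL.STr.pre β s)))))
  | ec t1 t2 ih1 ih2 =>
      rintro ⟨α, ⟨u, hu⟩, hall⟩
      cases (hTr _ _ _).mp hu with
      | ecL h1 hst =>
          refine (hF _).mpr (CLL.SF.ecL ((hF _).mp
            (ih1 ⟨_, ⟨_, (hTr _ _ _).mpr h1⟩, ?_⟩)))
          intro y hy
          exact hall y ((hTr _ _ _).mpr (CLL.STr.ecL ((hTr _ _ _).mp hy) hst))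
      | ecR hst h2 =>
          refine (hF _).mpr (CLL.SF.ecR ((hF _).mp
            (ih2 ⟨_, ⟨_, (hTr _ _ _).mpr h2⟩, ?_⟩)))
          intro y hy
          exact hall y ((hTr _ _ _).mpr (CLL.STr.ecR hst ((hTr _ _ _).mp hy)))
      | ecTauL h1 =>
          by_cases h2F : M.F t2
          · exact (hF _).mpr (CLL.SF.ecR ((hF _).mp h2F))
          · refine (hF _).mpr (CLL.SF.ecL ((hF _).mp
              (ih1 ⟨none, ⟨_, (hTr _ _ _).mpr h1⟩, ?_⟩)))
            intro y hy
            have h := (hF _).mp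
              (hall _ ((hTr _ _ _).mpr (CLL.STr.ecTauL ((hTr _ _ _).mp hy))))
            rcases sf_ec_inv h with h | h
            · exact (hF _).mpr h
            · exact absurd ((hF _).mpr h) h2F
      | ecTauR h2 =>
          by_cases h1F : M.F t1
          · exact (hF _).mpr (CLL.SF.ecL ((hF _).mp h1F))
          · refine (hF _).mpr (CLL.SF.ecR ((hF _).mp
              (ih2 ⟨none, ⟨_, (hTr _ _ _).mpr h2⟩, ?_⟩)))
            intro y hy
            have h := (hF _).mp
              (hall _ ((hTr _ _ _).mpr (CLL.STr.ecTauR ((hTr _ _ _).mp hy))))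
            rcases sf_ec_inv h with h | h
            · exact absurd ((hF _).mpr h) h1F
            · exact (hF _).mpr h
  | conj t1 t2 _ _ =>
      rintro ⟨α, ⟨u, hu⟩, hall⟩
      refine (hF _).mpr (CLL.SF.conjDead ((hTr _ _ _).mp hu) ?_)
      intro hfb
      cases (hFbar _ _).mp hfb with
      | intro hstep hnF => exact hnF (hall _ ((hTr _ _ _).mpr hstep))
  | disj t1 t2 _ _ =>
      rintro ⟨α, ⟨u, hu⟩, hall⟩
      have key : α = none → M.F (CLL.Tm.disj t1 t2) := fun hα => (hF _).mpr (CLL.SF.disj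
        ((hF _).mp (hall t1 ((hTr _ _ _).mpr (hα ▸ CLL.STr.disjL t1 t2))))
        ((hF _).mp (hall t2 ((hTr _ _ _).mpr (hα ▸ CLL.STr.disjR t1 t2)))))
      cases (hTr _ _ _).mp hu with
      | disjL => exact key rfl
      | disjR => exact key rfl
  | par A t1 t2 ih1 ih2 =>
      rintro ⟨α, ⟨u, hu⟩, hall⟩
      cases (hTr _ _ _).mp hu with
      | parTauL h1 =>
          by_cases h2F : M.F t2
          · exact (hF _).mpr (CLL.SF.parR ((hF _).mp h2F))
          · refine (hF _).mpr (CLL.SF.parL ((hF _).mp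
              (ih1 ⟨none, ⟨_, (hTr _ _ _).mpr h1⟩, ?_⟩)))
            intro y hy
            have h := (hF _).mp
              (hall _ ((hTr _ _ _).mpr (CLL.STr.parTauL ((hTr _ _ _).mp hy))))
            rcases sf_par_inv h with h | h
            · exact (hF _).mpr h
            · exact absurd ((hF _).mpr h) h2F
      | parTauR h2 =>
          by_cases h1F : M.F t1
          · exact (hF _).mpr (CLL.SF.parL ((hF _).mp h1F))
          · refine (hF _).mpr (CLL.SF.parR ((hF _).mp
              (ih2 ⟨none, ⟨_, (hTr _ _ _).mpr h2⟩, ?_⟩)))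
            intro y hy
            have h := (hF _).mp
              (hall _ ((hTr _ _ _).mpr (CLL.STr.parTauR ((hTr _ _ _).mp hy))))
            rcases sf_par_inv h with h | h
            · exact absurd ((hF _).mpr h) h1F
            · exact (hF _).mpr h
      | parL h1 hst hna =>
          by_cases h2F : M.F t2
          · exact (hF _).mpr (CLL.SF.parR ((hF _).mp h2F))
          · refine (hF _).mpr (CLL.SF.parL ((hF _).mp
              (ih1 ⟨_, ⟨_, (hTr _ _ _).mpr h1⟩, ?_⟩)))
            intro y hy
            have h := (hF _).mp (hall _ ((hTr _ _ _).mpr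
              (CLL.STr.parL ((hTr _ _ _).mp hy) hst hna)))
            rcases sf_par_inv h with h | h
            · exact (hF _).mpr h
            · exact absurd ((hF _).mpr h) h2F
      | parR hst h2 hna =>
          by_cases h1F : M.F t1
          · exact (hF _).mpr (CLL.SF.parL ((hF _).mp h1F))
          · refine (hF _).mpr (CLL.SF.parR ((hF _).mp
              (ih2 ⟨_, ⟨_, (hTr _ _ _).mpr h2⟩, ?_⟩)))
            intro y hy
            have h := (hF _).mp (hall _ ((hTr _ _ _).mpr
              (CLL.STr.parR hst ((hTr _ _ _).mp hy) hna)))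
            rcases sf_par_inv h with h | h
            · exact absurd ((hF _).mpr h) h1F
            · exact (hF _).mpr h
      | @parSync _ _ _ y1 y2 a h1 h2 ha =>
          by_cases hF1 : ∀ y, M.Tr t1 (some a) y → M.F y
          · exact (hF _).mpr (CLL.SF.parL ((hF _).mp
              (ih1 ⟨some a, ⟨y1, (hTr _ _ _).mpr h1⟩, hF1⟩)))
          · push_neg at hF1
            obtain ⟨y, hy, hyF⟩ := hF1
            refine (hF _).mpr (CLL.SF.parR ((hF _).mp
              (ih2 ⟨some a, ⟨y2, (hTr _ _ _).mpr h2⟩, ?_⟩)))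
            intro z hz
            have h := (hF _).mp (hall _ ((hTr _ _ _).mpr
              (CLL.STr.parSync ((hTr _ _ _).mp hy) ((hTr _ _ _).mp hz) ha)))
            rcases sf_par_inv h with h | h
            · exact absurd ((hF _).mpr h) hyF
            · exact (hF _).mpr h
end

section
/- The LTS associated with CLL satisfies condition (LTS2): for every CLL process term t, if t ∉ F_CLL then there exists a stable term t' with t ⇒ε_F| t'. (Hence, together with (LTS1), LTS(CLL) is a Logic LTS.) -/
namespace CLL

attribute [local instance] Classical.propDecidable

variable {Act : Type}

end CLL


/-!
A τ-step always shrinks the term, so τ-sequences terminate, and it suffices to show that a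
consistent term with a τ-transition has a consistent τ-successor. For `∨` one of the two
disjuncts is consistent, for `□` and `∥_A` a consistent τ-successor of the moving component
is supplied by induction, and for `∧` this is exactly what the rule for `F̄_τ` guarantees: if
every τ-successor of `t₁ ∧ t₂` were inconsistent, then `t₁ ∧ t₂ F̄_τ` would fail and the last
`F`-rule would make `t₁ ∧ t₂` inconsistent.
-/

namespace CLL

variable {Act : Type} {M : Model Act}

theorem STr.sizeOf_lt {t s : Tm Act} {α : Option Act} (h : STr M t α s) :
    sizeOf s < sizeOf t := by
  induction h <;> simp only [Tm.pre.sizeOf_spec, Tm.ec.sizeOf_spec, Tm.conj.sizeOf_spec,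
    Tm.disj.sizeOf_spec, Tm.par.sizeOf_spec] at * <;> omega

section SF

variable {t t1 t2 : Tm Act}

theorem sf_pre_iff {α : Option Act} : SF M (.pre α t) ↔ SF M t :=
  ⟨fun h => by cases h; assumption, .pre α⟩

theorem sf_ec_iff : SF M (.ec t1 t2) ↔ SF M t1 ∨ SF M t2 :=
  ⟨fun h => by cases h <;> simp_all, fun h => h.elim .ecL .ecR⟩

theorem sf_par_iff {A : Set Act} : SF M (.par A t1 t2) ↔ SF M t1 ∨ SF M t2 :=
  ⟨fun h => by cases h <;> simp_all, fun h => h.elim .parL .parR⟩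

theorem sf_disj_iff : SF M (.disj t1 t2) ↔ SF M t1 ∧ SF M t2 :=
  ⟨fun h => by cases h; constructor <;> assumption, fun h => .disj h.1 h.2⟩

end SF

theorem exists_tau_not_sf (hM : IsStable M) :
    ∀ {t s : Tm Act}, STr M t none s → ¬ SF M t → ∃ s', STr M t none s' ∧ ¬ SF M s'
  | .pre _ u, _, .pre _ _, hF => ⟨u, .pre none u, mt sf_pre_iff.2 hF⟩
  | .ec _ t2, _, .ecTauL h1, hF => by
    rw [sf_ec_iff, not_or] at hF
    obtain ⟨y, hy, hFy⟩ := exists_tau_not_sf hM h1 hF.1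
    exact ⟨.ec y t2, .ecTauL hy, by rw [sf_ec_iff]; tauto⟩
  | .ec t1 _, _, .ecTauR h2, hF => by
    rw [sf_ec_iff, not_or] at hF
    obtain ⟨y, hy, hFy⟩ := exists_tau_not_sf hM h2 hF.2
    exact ⟨.ec t1 y, .ecTauR hy, by rw [sf_ec_iff]; tauto⟩
  | .par A _ t2, _, .parTauL h1, hF => by
    rw [sf_par_iff, not_or] at hF
    obtain ⟨y, hy, hFy⟩ := exists_tau_not_sf hM h1 hF.1
    exact ⟨.par A y t2, .parTauL hy, by rw [sf_par_iff]; tauto⟩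
  | .par A t1 _, _, .parTauR h2, hF => by
    rw [sf_par_iff, not_or] at hF
    obtain ⟨y, hy, hFy⟩ := exists_tau_not_sf hM h2 hF.2
    exact ⟨.par A t1 y, .parTauR hy, by rw [sf_par_iff]; tauto⟩
  | .disj t1 t2, _, _, hF => by
    by_cases h1 : SF M t1
    · exact ⟨t2, .disjR t1 t2, fun h2 => hF (.disj h1 h2)⟩
    · exact ⟨t1, .disjL t1 t2, h1⟩
  | .conj t1 t2, _, h, hF => by
    by_contra! hno
    have hFbar : ¬ M.Fbar (.conj t1 t2) none := by
      rw [hM.2.2]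
      rintro ⟨hy, hFy⟩
      exact hFy ((hM.2.1 _).2 (hno _ hy))
    exact hF (.conjDead h hFbar)

theorem wellFounded_tau (hM : IsStable M) : WellFounded fun s t : Tm Act => M.Tr t none s :=
  Subrelation.wf (fun h => ((hM.1 _ _ _).1 h).sizeOf_lt) (measure sizeOf).wf

theorem exists_epsFS_of_wellFounded (hwf : WellFounded fun s t : Tm Act => M.Tr t none s)
    (hstep : ∀ {t s : Tm Act}, M.Tr t none s → ¬ M.F t → ∃ s', M.Tr t none s' ∧ ¬ M.F s')
    (t : Tm Act) (hF : ¬ M.F t) : ∃ t', EpsFS M t t' := by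
  induction t using hwf.induction with
  | _ t ih =>
    by_cases hst : Stable M t
    · exact ⟨t, ⟨hF, .refl⟩, hst⟩
    obtain ⟨s₀, hs₀⟩ := not_forall_not.1 hst
    obtain ⟨s, hs, hFs⟩ := hstep hs₀ hF
    obtain ⟨t', ⟨-, hst'⟩, hstable⟩ := ih s hs hFs
    exact ⟨t', ⟨hF, .head ⟨hs, hF, hFs⟩ hst'⟩, hstable⟩

end CLL

/-- `LTS(CLL)` satisfies (LTS2): every consistent term can reach a
consistent stable term by consistent τ-transitions. -/
theorem stmt3 (Act : Type) (M : CLL.Model Act) (hM : CLL.IsStable M) :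
    ∀ t : CLL.Tm Act, ¬ M.F t → ∃ t', CLL.EpsFS M t t' := by
  refine CLL.exists_epsFS_of_wellFounded (CLL.wellFounded_tau hM) fun hs hF => ?_
  simp only [hM.1, hM.2.1] at hs hF ⊢
  exact CLL.exists_tau_not_sf hM hs hF
end

section
/- For every CLL process term t with τ ∈ I(t): t ∈ F_CLL if and only if every s with t →τ_CLL s satisfies s ∈ F_CLL. -/
namespace CLL

attribute [local instance] Classical.propDecidable

variable {Act : Type}

end CLL

/-- No term has both a visible transition and a τ-transition. -/
theorem noMix' {Act : Type} {M : CLL.Model Act} (hM : CLL.IsStable M)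
    {t y : CLL.Tm Act} {α : Option Act} (h : CLL.STr M t α y) (hα : α ≠ none) :
    ∀ s, ¬ CLL.STr M t none s := by
  induction h with
  | pre α t => intro s hs; cases hs; exact hα rfl
  | ecTauL h ih => exact absurd rfl hα
  | ecTauR h ih => exact absurd rfl hα
  | conjTauL h ih => exact absurd rfl hα
  | conjTauR h ih => exact absurd rfl hα
  | disjL => exact absurd rfl hα
  | disjR => exact absurd rfl hα
  | parTauR h ih => exact absurd rfl hα
  | ecL h1 hst ih =>
    intro s hs
    cases hs with
    | ecTauL h => exact ih (by simp) _ h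
    | ecTauR h => exact hst _ ((hM.1 _ _ _).mpr h)
  | ecR hst h2 ih =>
    intro s hs
    cases hs with
    | ecTauL h => exact hst _ ((hM.1 _ _ _).mpr h)
    | ecTauR h => exact ih (by simp) _ h
  | conjAct h1 h2 ih1 ih2 =>
    intro s hs
    cases hs with
    | conjTauL h => exact ih1 (by simp) _ h
    | conjTauR h => exact ih2 (by simp) _ h
  | parTauL h ih => exact absurd rfl hα
  | parL h1 hst _ ih =>
    intro s hs
    cases hs with
    | parTauL h => exact ih (by simp) _ h
    | parTauR h => exact hst _ ((hM.1 _ _ _).mpr h)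
  | parR hst h2 _ ih =>
    intro s hs
    cases hs with
    | parTauL h => exact hst _ ((hM.1 _ _ _).mpr h)
    | parTauR h => exact ih (by simp) _ h
  | parSync h1 h2 _ ih1 ih2 =>
    intro s hs
    cases hs with
    | parTauL h => exact ih1 (by simp) _ h
    | parTauR h => exact ih2 (by simp) _ h

/-- If `t` is inconsistent, so is every τ-derivative of `t`. -/
theorem F_tau {Act : Type} {M : CLL.Model Act} (hM : CLL.IsStable M) :
    ∀ t : CLL.Tm Act, CLL.SF M t → ∀ s, CLL.STr M t none s → CLL.SF M s := by
  intro t hF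
  induction hF with
  | bot => intro s hs; cases hs
  | pre α h ih => intro s hs; cases hs; assumption
  | disj h1 h2 ih1 ih2 =>
    intro s hs
    cases hs with
    | disjL => exact h1
    | disjR => exact h2
  | ecL h ih =>
    intro s hs
    cases hs with
    | ecTauL h1 => exact CLL.SF.ecL (ih _ h1)
    | ecTauR h2 => exact CLL.SF.ecL h
  | ecR h ih =>
    intro s hs
    cases hs with
    | ecTauL h1 => exact CLL.SF.ecR h
    | ecTauR h2 => exact CLL.SF.ecR (ih _ h2)
  | conjL h ih =>
    intro s hs
    cases hs with
    | conjTauL h1 => exact CLL.SF.conjL (ih _ h1)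
    | conjTauR h2 => exact CLL.SF.conjL h
  | conjR h ih =>
    intro s hs
    cases hs with
    | conjTauL h1 => exact CLL.SF.conjR h
    | conjTauR h2 => exact CLL.SF.conjR (ih _ h2)
  | parL h ih =>
    intro s hs
    cases hs with
    | parTauL h1 => exact CLL.SF.parL (ih _ h1)
    | parTauR h2 => exact CLL.SF.parL h
  | parR h ih =>
    intro s hs
    cases hs with
    | parTauL h1 => exact CLL.SF.parR h
    | parTauR h2 => exact CLL.SF.parR (ih _ h2)
  | conjMisL ht1 hno hstab =>
    intro s hs
    exact absurd ((hM.1 _ _ _).mpr hs) (hstab s)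
  | conjMisR hno ht2 hstab =>
    intro s hs
    exact absurd ((hM.1 _ _ _).mpr hs) (hstab s)
  | @conjDead t1 t2 z α hz hnb =>
    intro s hs
    match α, hz with
    | some a, hz => exact absurd hs (noMix' hM hz (by simp) s)
    | none, hz =>
      by_contra hns
      exact hnb ((hM.2.2 _ _).mpr
        (CLL.SFbar.intro hs (fun hFs => hns ((hM.2.1 s).mp hFs))))

/-- If all τ-derivatives of `t` are inconsistent (and there is one), then `t`
is inconsistent. -/
theorem tau_F {Act : Type} {M : CLL.Model Act} (hM : CLL.IsStable M) :
    ∀ t : CLL.Tm Act, (∃ s, CLL.STr M t none s) →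
      (∀ s, CLL.STr M t none s → CLL.SF M s) → CLL.SF M t := by
  intro t
  induction t with
  | nil => rintro ⟨s, hs⟩; cases hs
  | bot => intro _ _; exact CLL.SF.bot
  | pre α t ih =>
    rintro ⟨s, hs⟩ hall
    cases hs
    exact CLL.SF.pre none (hall t (CLL.STr.pre none t))
  | disj t1 t2 ih1 ih2 =>
    rintro ⟨s, hs⟩ hall
    exact CLL.SF.disj (hall t1 (CLL.STr.disjL t1 t2)) (hall t2 (CLL.STr.disjR t1 t2))
  | conj t1 t2 ih1 ih2 =>
    rintro ⟨s, hs⟩ hall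
    refine CLL.SF.conjDead hs (fun hfb => ?_)
    rcases (hM.2.2 _ _).mp hfb with ⟨hy, hn⟩
    exact hn ((hM.2.1 _).mpr (hall _ hy))
  | ec t1 t2 ih1 ih2 =>
    rintro ⟨s, hs⟩ hall
    by_cases h2 : CLL.SF M t2
    · exact CLL.SF.ecR h2
    by_cases h1 : CLL.SF M t1
    · exact CLL.SF.ecL h1
    cases hs with
    | ecTauL ht =>
      refine absurd (ih1 ⟨_, ht⟩ (fun y hy => ?_)) h1
      cases hall _ (CLL.STr.ecTauL (t2 := t2) hy) with
      | ecL h => exact h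
      | ecR h => exact absurd h h2
    | ecTauR ht =>
      refine absurd (ih2 ⟨_, ht⟩ (fun y hy => ?_)) h2
      cases hall _ (CLL.STr.ecTauR (t1 := t1) hy) with
      | ecL h => exact absurd h h1
      | ecR h => exact h
  | par A t1 t2 ih1 ih2 =>
    rintro ⟨s, hs⟩ hall
    by_cases h2 : CLL.SF M t2
    · exact CLL.SF.parR h2
    by_cases h1 : CLL.SF M t1
    · exact CLL.SF.parL h1
    cases hs with
    | parTauL ht =>
      refine absurd (ih1 ⟨_, ht⟩ (fun y hy => ?_)) h1
      cases hall _ (CLL.STr.parTauL (t2 := t2) hy) with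
      | parL h => exact h
      | parR h => exact absurd h h2
    | parTauR ht =>
      refine absurd (ih2 ⟨_, ht⟩ (fun y hy => ?_)) h2
      cases hall _ (CLL.STr.parTauR (t1 := t1) hy) with
      | parL h => exact absurd h h1
      | parR h => exact h

/-- if `τ ∈ I(t)` then `t ∈ F_CLL` iff all τ-derivatives of `t`
are in `F_CLL`. -/
theorem stmt4 (Act : Type) (M : CLL.Model Act) (hM : CLL.IsStable M) :
    ∀ t : CLL.Tm Act, (∃ s, M.Tr t none s) →
      (M.F t ↔ ∀ s, M.Tr t none s → M.F s) := by
  intro t ⟨s0, hs0⟩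
  constructor
  · intro hF s hs
    exact (hM.2.1 s).mpr
      (F_tau hM t ((hM.2.1 t).mp hF) s ((hM.1 _ _ _).mp hs))
  · intro hall
    exact (hM.2.1 t).mpr
      (tau_F hM t ⟨s0, (hM.1 _ _ _).mp hs0⟩
        (fun s hs => (hM.2.1 s).mp (hall s ((hM.1 _ _ _).mpr hs))))
end

section
/- For all CLL process terms t1, t2, t and α ∈ Act_τ: (1) t1 ∈ F_CLL and t2 ∈ F_CLL if and only if t1∨t2 ∈ F_CLL; (2) α.t ∈ F_CLL if and only if t ∈ F_CLL; (3) for ⊙ ∈ {□, ∥_A}: t1 ∈ F_CLL or t2 ∈ F_CLL if and only if t1⊙t2 ∈ F_CLL; (4) t1 ∈ F_CLL or t2 ∈ F_CLL implies t1∧t2 ∈ F_CLL; (5) 0 ∉ F_CLL and ⊥ ∈ F_CLL. -/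
namespace CLL

attribute [local instance] Classical.propDecidable

variable {Act : Type}

end CLL

/-- basic properties of `F_CLL`. -/
theorem stmt5 (Act : Type) (M : CLL.Model Act) (hM : CLL.IsStable M) :
    (∀ t1 t2 : CLL.Tm Act, (M.F t1 ∧ M.F t2) ↔ M.F (CLL.Tm.disj t1 t2)) ∧
    (∀ (α : Option Act) (t : CLL.Tm Act), M.F (CLL.Tm.pre α t) ↔ M.F t) ∧
    (∀ t1 t2 : CLL.Tm Act, (M.F t1 ∨ M.F t2) ↔ M.F (CLL.Tm.ec t1 t2)) ∧
    (∀ (A : Set Act) (t1 t2 : CLL.Tm Act),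
        (M.F t1 ∨ M.F t2) ↔ M.F (CLL.Tm.par A t1 t2)) ∧
    (∀ t1 t2 : CLL.Tm Act, (M.F t1 ∨ M.F t2) → M.F (CLL.Tm.conj t1 t2)) ∧
    (¬ M.F CLL.Tm.nil ∧ M.F CLL.Tm.bot) := by
  obtain ⟨-, hF, -⟩ := hM
  refine ⟨?_, ?_, ?_, ?_, ?_, ?_, ?_⟩
  · intro t1 t2
    rw [hF, hF, hF]
    constructor
    · rintro ⟨h1, h2⟩; exact CLL.SF.disj h1 h2
    · rintro h; cases h with
      | disj h1 h2 => exact ⟨h1, h2⟩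
  · intro α t
    rw [hF, hF]
    constructor
    · rintro h; cases h with
      | pre _ h => exact h
    · exact CLL.SF.pre α
  · intro t1 t2
    rw [hF, hF, hF]
    constructor
    · rintro (h | h)
      · exact CLL.SF.ecL h
      · exact CLL.SF.ecR h
    · rintro h; cases h with
      | ecL h => exact Or.inl h
      | ecR h => exact Or.inr h
  · intro A t1 t2
    rw [hF, hF, hF]
    constructor
    · rintro (h | h)
      · exact CLL.SF.parL h
      · exact CLL.SF.parR h
    · rintro h; cases h with
      | parL h => exact Or.inl h
      | parR h => exact Or.inr h
  · intro t1 t2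
    rw [hF, hF, hF]
    rintro (h | h)
    · exact CLL.SF.conjL h
    · exact CLL.SF.conjR h
  · rw [hF]; intro h; cases h
  · rw [hF]; exact CLL.SF.bot
end

section
/- Let ⊙ ∈ {□, ∧, ∥_A}. If t1⊙(t2∨t3) ⇒ε_F| t4, then there exist a term t1', a sequence t1⊙(t2∨t3) ≡ T_0 →τ_F ⋯ →τ_F T_n ≡ t4 with n ≥ 1, an index j < n and k ∈ {2, 3} such that t1 ⇒ε_F t1', T_j ≡ t1'⊙(t2∨t3) and T_{j+1} ≡ t1'⊙t_k. -/
namespace CLL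

attribute [local instance] Classical.propDecidable

variable {Act : Type}

end CLL

/-! A run `op t1 (t2 ∨ t3) ⇒ε_F| t4` cannot stop before the disjunction is resolved, because
`op u (t2 ∨ t3)` always has the τ-step to `op u t2`, while `t4` is stable. Until that step every
τ-step of the run is a step of the left operand, and it stays consistent because `F` propagates
from an operand to `op`. -/

namespace Relation.ReflTransGen

variable {α : Type*} {r : α → α → Prop} {a b c d : α}

theorem exists_seq (h : ReflTransGen r a b) :
    ∃ (n : ℕ) (T : ℕ → α), T 0 = a ∧ T n = b ∧ ∀ i < n, r (T i) (T (i + 1)) := by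
  induction h with
  | refl => exact ⟨0, fun _ => a, rfl, rfl, fun i hi => absurd hi (Nat.not_lt_zero i)⟩
  | @tail b c _ hbc ih =>
    obtain ⟨n, T, hT0, hTn, hT⟩ := ih
    refine ⟨n + 1, Function.update T (n + 1) c, ?_, by simp, fun i hi => ?_⟩
    · simpa [Function.update_of_ne (Nat.succ_ne_zero n).symm] using hT0
    · rcases Nat.lt_succ_iff_lt_or_eq.mp hi with hi | rfl
      · rw [Function.update_of_ne (by omega), Function.update_of_ne (by omega)]
        exact hT i hi
      · simpa [hTn] using hbc

theorem exists_seq_through_step (hab : ReflTransGen r a b) (hbc : r b c)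
    (hcd : ReflTransGen r c d) :
    ∃ (n : ℕ) (T : ℕ → α) (j : ℕ), j < n ∧ T 0 = a ∧ T n = d ∧
      (∀ i < n, r (T i) (T (i + 1))) ∧ T j = b ∧ T (j + 1) = c := by
  obtain ⟨m, S, hS0, hSm, hS⟩ := hab.exists_seq
  obtain ⟨k, U, hU0, hUk, hU⟩ := hcd.exists_seq
  refine ⟨m + 1 + k, fun i => if i ≤ m then S i else U (i - (m + 1)), m, by omega,
    by simpa using hS0, ?_, fun i hi => ?_, by simpa using hSm, by simpa using hU0⟩
  · simpa [show ¬ m + 1 + k ≤ m by omega, show m + 1 + k - (m + 1) = k by omega] using hUk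
  · rcases Nat.lt_trichotomy i m with hi' | rfl | hi'
    · simpa [hi'.le, Nat.succ_le_of_lt hi'] using hS i hi'
    · simpa [hSm, hU0] using hbc
    · have := hU (i - (m + 1)) (by omega)
      simpa [show ¬ i ≤ m by omega, show ¬ i + 1 ≤ m by omega,
        show i + 1 - (m + 1) = i - (m + 1) + 1 by omega] using this

end Relation.ReflTransGen

namespace CLL

variable {Act : Type} {M : Model Act} {op : Tm Act → Tm Act → Tm Act}

theorem IsStaticOp.F_left (hM : IsStable M) (hop : IsStaticOp Act op) {u v : Tm Act}
    (hu : M.F u) : M.F (op u v) := by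
  rw [hM.2.1] at hu ⊢
  rcases hop with rfl | rfl | ⟨A, rfl⟩
  · exact SF.ecL hu
  · exact SF.conjL hu
  · exact SF.parL hu

theorem IsStaticOp.not_stable_disj (hM : IsStable M) (hop : IsStaticOp Act op)
    (u t2 t3 : Tm Act) : ¬ Stable M (op u (Tm.disj t2 t3)) := fun hst => by
  refine hst (op u t2) ((hM.1 _ _ _).2 ?_)
  rcases hop with rfl | rfl | ⟨A, rfl⟩
  · exact STr.ecTauR (STr.disjL t2 t3)
  · exact STr.conjTauR (STr.disjL t2 t3)
  · exact STr.parTauR (STr.disjL t2 t3)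

theorem IsStaticOp.tau_disj_cases (hM : IsStable M) (hop : IsStaticOp Act op)
    {u t2 t3 s : Tm Act} (h : M.Tr (op u (Tm.disj t2 t3)) none s) :
    (∃ u', M.Tr u none u' ∧ s = op u' (Tm.disj t2 t3)) ∨ s = op u t2 ∨ s = op u t3 := by
  rw [hM.1] at h
  rcases hop with rfl | rfl | ⟨A, rfl⟩
  · cases h with
    | ecTauL hu => exact Or.inl ⟨_, (hM.1 _ _ _).2 hu, rfl⟩
    | ecTauR hd => cases hd <;> simp
  · cases h with
    | conjTauL hu => exact Or.inl ⟨_, (hM.1 _ _ _).2 hu, rfl⟩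
    | conjTauR hd => cases hd <;> simp
  · cases h with
    | parTauL hu => exact Or.inl ⟨_, (hM.1 _ _ _).2 hu, rfl⟩
    | parTauR hd => cases hd <;> simp

theorem IsStaticOp.exists_resolving_step (hM : IsStable M) (hop : IsStaticOp Act op)
    {u t2 t3 t4 : Tm Act} (h : Relation.ReflTransGen (TauF M) (op u (Tm.disj t2 t3)) t4)
    (ht4 : Stable M t4) :
    ∃ u' tk, (tk = t2 ∨ tk = t3) ∧ EpsF M u u' ∧
      Relation.ReflTransGen (TauF M) (op u (Tm.disj t2 t3)) (op u' (Tm.disj t2 t3)) ∧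
      TauF M (op u' (Tm.disj t2 t3)) (op u' tk) ∧ Relation.ReflTransGen (TauF M) (op u' tk) t4 := by
  generalize hs : op u (Tm.disj t2 t3) = s at h
  induction h using Relation.ReflTransGen.head_induction_on generalizing u with
  | refl => exact absurd ht4 (hs ▸ hop.not_stable_disj hM u t2 t3)
  | head hstep hrest ih =>
    subst hs
    have hu : ¬ M.F u := fun hu => hstep.2.1 (hop.F_left hM hu)
    rcases hop.tau_disj_cases hM hstep.1 with ⟨u', hu', rfl⟩ | rfl | rfl
    · obtain ⟨u'', tk, htk, hEps, hpre, hres, hpost⟩ := ih rfl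
      exact ⟨u'', tk, htk, ⟨hu, .head ⟨hu', hu, hEps.1⟩ hEps.2⟩, .head hstep hpre, hres, hpost⟩
    · exact ⟨u, t2, .inl rfl, ⟨hu, .refl⟩, .refl, hstep, hrest⟩
    · exact ⟨u, t3, .inr rfl, ⟨hu, .refl⟩, .refl, hstep, hrest⟩

end CLL

/-- any run `t1⊙(t2∨t3) ⇒ε_F| t4` passes through a step resolving
the disjunction. -/
theorem stmt8 (Act : Type) (M : CLL.Model Act) (hM : CLL.IsStable M)
    (op : CLL.Tm Act → CLL.Tm Act → CLL.Tm Act) (hop : CLL.IsStaticOp Act op)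
    (t1 t2 t3 t4 : CLL.Tm Act)
    (h : CLL.EpsFS M (op t1 (CLL.Tm.disj t2 t3)) t4) :
    ∃ (n : ℕ) (T : ℕ → CLL.Tm Act) (t1' : CLL.Tm Act) (j : ℕ),
      1 ≤ n ∧
      T 0 = op t1 (CLL.Tm.disj t2 t3) ∧ T n = t4 ∧
      (∀ i < n, CLL.TauF M (T i) (T (i + 1))) ∧
      j < n ∧ CLL.EpsF M t1 t1' ∧
      T j = op t1' (CLL.Tm.disj t2 t3) ∧
      (T (j + 1) = op t1' t2 ∨ T (j + 1) = op t1' t3) := by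
  obtain ⟨⟨-, hrun⟩, ht4⟩ := h
  obtain ⟨t1', tk, htk, hEps, hpre, hres, hpost⟩ := hop.exists_resolving_step hM hrun ht4
  obtain ⟨n, T, j, hj, hT0, hTn, hT, hTj, hTj1⟩ := hpre.exists_seq_through_step hres hpost
  refine ⟨n, T, t1', j, by omega, hT0, hTn, hT, hj, hEps, hTj, ?_⟩
  rcases htk with rfl | rfl
  exacts [.inl hTj1, .inr hTj1]
end
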